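/- arXiv:1904.05615 — 4 statements merged into one kernel-verified Lean document; each statement's English description precedes it below -/
import Mathlib

section
/- Let 0 < q < 1, 0 < ϱ < 1−q. Define the residual busy period transform T̃*(s) = (1−q−ϱ)·(−(s+1−ϱ−q) + √Δ_q(s))/(2ϱs) for s > 0, where Δ_q(s) = (s+1+ϱ−q)² − 4ϱ(1−q). Then T̃*(s) = φ(1/(1 + s + ϱ − ϱ·T*(s))), where φ(z) = ((1−ϱ−q)z)/(1−(ϱ+q)z) and T*(s) = (s+1−q+ϱ−√Δ_q(s))/(2ϱ). -/
/-- T̃*(s) = (1−q−ϱ)(−(s+1−ϱ−q)+√Δ_q(s))/(2ϱs) equals φ(1/(1+s+ϱ−ϱT*(s)))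
where φ(z) = ((1−ϱ−q)z)/(1−(ϱ+q)z) and T*(s) = (s+1−q+ϱ−√Δ_q(s))/(2ϱ). -/
theorem stmt_7 (q ϱ s : ℝ) (hq0 : 0 < q) (hq1 : q < 1) (hϱ : 0 < ϱ)
    (hstab : ϱ < 1 - q) (hs : 0 < s) :
    let Δ := (s + 1 + ϱ - q) ^ 2 - 4 * ϱ * (1 - q)
    let T := (s + 1 - q + ϱ - Real.sqrt Δ) / (2 * ϱ)
    let φ : ℝ → ℝ := fun z => ((1 - ϱ - q) * z) / (1 - (ϱ + q) * z)
    (1 - q - ϱ) * (-(s + 1 - ϱ - q) + Real.sqrt Δ) / (2 * ϱ * s) =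
      φ (1 / (1 + s + ϱ - ϱ * T)) := by
  intro Δ T φ
  have hΔeq : Δ = (s + 1 - ϱ - q) ^ 2 + 4 * ϱ * s := by simp only [Δ]; ring
  have hΔpos : 0 < Δ := by rw [hΔeq]; positivity
  set r := Real.sqrt Δ with hr
  have hr2 : r ^ 2 = Δ := Real.sq_sqrt hΔpos.le
  have hrnn : 0 ≤ r := Real.sqrt_nonneg _
  have hD : 1 + s + ϱ - ϱ * T = (s + 1 + ϱ + q + r) / 2 := by
    simp only [T]; field_simp; ring
  have hDpos : 0 < (s + 1 + ϱ + q + r) / 2 := by linarith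
  have hD2pos : 0 < (s + 1 - ϱ - q + r) / 2 := by linarith
  rw [hD]
  simp only [φ]
  have h1 : 1 - (ϱ + q) * (1 / ((s + 1 + ϱ + q + r) / 2)) =
      ((s + 1 - ϱ - q + r) / 2) / ((s + 1 + ϱ + q + r) / 2) := by
    field_simp; ring
  rw [h1]
  have hkey : r ^ 2 = (s + 1 - ϱ - q) ^ 2 + 4 * ϱ * s := by rw [hr2, hΔeq]
  have h2 : s + 1 + ϱ + q + r ≠ 0 := by positivity
  have h3 : s + 1 - ϱ - q + r ≠ 0 := by
    have := hD2pos; intro h; rw [h] at this; linarith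
  field_simp
  nlinarith [hkey]
end

section
/- Let 0 < q < 1, 0 < ϱ < 1−q. The function s ↦ T̃*(s) = (1−q−ϱ)·(−(s+1−ϱ−q) + √Δ_q(s))/(2ϱs) is monotone decreasing on the interval (σ_q^+, +∞), where Δ_q(s) = (s+1+ϱ−q)² − 4ϱ(1−q) and σ_q^+ = −(√(1−q) − √ϱ)². -/
/-- The function s ↦ T̃*(s) (extended by continuity at s = 0, where its value is 1)
is monotone decreasing on (σ_q^+, +∞). -/
theorem stmt_11 (q ϱ : ℝ) (hq0 : 0 < q) (hq1 : q < 1) (hϱ : 0 < ϱ)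
    (hstab : ϱ < 1 - q) :
    StrictAntiOn
      (fun s : ℝ => if s = 0 then 1 else
        (1 - q - ϱ) *
          (-(s + 1 - ϱ - q) + Real.sqrt ((s + 1 + ϱ - q) ^ 2 - 4 * ϱ * (1 - q))) /
          (2 * ϱ * s))
      (Set.Ioi (-(Real.sqrt (1 - q) - Real.sqrt ϱ) ^ 2)) := by
  set v := Real.sqrt (1 - q) with hvdef
  set u := Real.sqrt ϱ with hudef
  have hv : v ^ 2 = 1 - q := Real.sq_sqrt (by linarith)
  have hu : u ^ 2 = ϱ := Real.sq_sqrt hϱ.le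
  have hv0 : 0 < v := Real.sqrt_pos.mpr (by linarith)
  have hu0 : 0 < u := Real.sqrt_pos.mpr hϱ
  have huv : u < v := by nlinarith
  have hA : ∀ x ∈ Set.Ioi (-(v - u) ^ 2), 0 < x + 1 - ϱ - q := by
    intro x hx; simp only [Set.mem_Ioi] at hx; nlinarith
  have hΔ : ∀ x ∈ Set.Ioi (-(v - u) ^ 2), 0 < (x + 1 + ϱ - q) ^ 2 - 4 * ϱ * (1 - q) := by
    intro x hx; simp only [Set.mem_Ioi] at hx
    have h1 : 0 < x + (v - u) ^ 2 := by linarith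
    have h2 : 0 < x + (v + u) ^ 2 := by nlinarith
    nlinarith [mul_pos h1 h2]
  have hD : ∀ x ∈ Set.Ioi (-(v - u) ^ 2),
      0 < x + 1 - ϱ - q + Real.sqrt ((x + 1 + ϱ - q) ^ 2 - 4 * ϱ * (1 - q)) := by
    intro x hx
    have h1 := hA x hx
    have h2 := Real.sqrt_nonneg ((x + 1 + ϱ - q) ^ 2 - 4 * ϱ * (1 - q))
    linarith
  have hfg : ∀ x ∈ Set.Ioi (-(v - u) ^ 2),
      (if x = 0 then (1 : ℝ) else
        (1 - q - ϱ) *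
          (-(x + 1 - ϱ - q) + Real.sqrt ((x + 1 + ϱ - q) ^ 2 - 4 * ϱ * (1 - q))) /
          (2 * ϱ * x))
      = 2 * (1 - q - ϱ) /
          (x + 1 - ϱ - q + Real.sqrt ((x + 1 + ϱ - q) ^ 2 - 4 * ϱ * (1 - q))) := by
    intro x hx
    by_cases h0 : x = 0
    · subst h0
      rw [if_pos rfl]
      have h1 : (0 + 1 + ϱ - q) ^ 2 - 4 * ϱ * (1 - q) = (1 - q - ϱ) ^ 2 := by ring
      rw [h1, Real.sqrt_sq (by linarith)]
      rw [eq_div_iff (by intro h; nlinarith)]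
      ring
    · rw [if_neg h0]
      have hs : (Real.sqrt ((x + 1 + ϱ - q) ^ 2 - 4 * ϱ * (1 - q))) ^ 2
          = (x + 1 + ϱ - q) ^ 2 - 4 * ϱ * (1 - q) := Real.sq_sqrt (hΔ x hx).le
      rw [div_eq_div_iff (by positivity) (ne_of_gt (hD x hx))]
      nlinarith [hs]
  intro a ha b hb hab
  simp only
  rw [hfg a ha, hfg b hb]
  apply div_lt_div_of_pos_left (by linarith) (hD a ha)
  have hsqlt : Real.sqrt ((a + 1 + ϱ - q) ^ 2 - 4 * ϱ * (1 - q))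
      < Real.sqrt ((b + 1 + ϱ - q) ^ 2 - 4 * ϱ * (1 - q)) := by
    apply Real.sqrt_lt_sqrt (hΔ a ha).le
    have h1 := hA a ha
    nlinarith
  linarith
end

section
/- Let 0 < q < 1, 0 < ϱ < 1−q, and set σ_q^+ = −(√(1−q) − √ϱ)². Then U*(σ_q^+) := (1 + ϱ − √(ϱ(1−q)))/(q + √(ϱ(1−q))) satisfies 1 < U*(σ_q^+) < ζ_q^−, where ζ_q^− = ((√(ϱ+q) − √(ϱ(1−q)))/q)². Moreover ζ_q^− − U*(σ_q^+) = (√(ϱ(1−q))/(q²(q + √((1−q)ϱ)))) · (q + √((1−q)ϱ) − √(ϱ+q))². -/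
/-- 1 < U*(σ_q^+) < ζ_q^−, together with the explicit expression for the
difference ζ_q^− − U*(σ_q^+). -/
theorem stmt_12 (q ϱ : ℝ) (hq0 : 0 < q) (hq1 : q < 1) (hϱ : 0 < ϱ)
    (hstab : ϱ < 1 - q) :
    let U := (1 + ϱ - Real.sqrt (ϱ * (1 - q))) / (q + Real.sqrt (ϱ * (1 - q)))
    let ζ := ((Real.sqrt (ϱ + q) - Real.sqrt (ϱ * (1 - q))) / q) ^ 2
    1 < U ∧ U < ζ ∧
    ζ - U = Real.sqrt (ϱ * (1 - q)) / (q ^ 2 * (q + Real.sqrt ((1 - q) * ϱ))) *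
      (q + Real.sqrt ((1 - q) * ϱ) - Real.sqrt (ϱ + q)) ^ 2 := by
  intro U ζ
  have h1q : 0 < 1 - q := by linarith
  set s := Real.sqrt (ϱ * (1 - q)) with hs
  have hs0 : 0 < s := Real.sqrt_pos.mpr (by positivity)
  have hs2 : s ^ 2 = ϱ * (1 - q) := Real.sq_sqrt (by positivity)
  set t := Real.sqrt (ϱ + q) with htdef
  have ht0 : 0 < t := Real.sqrt_pos.mpr (by linarith)
  have ht2 : t ^ 2 = ϱ + q := Real.sq_sqrt (by linarith)
  have hcomm : Real.sqrt ((1 - q) * ϱ) = s := by rw [hs, mul_comm]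
  have hqs : 0 < q + s := by linarith
  have h2s : 2 * s < 1 + ϱ - q := by nlinarith [sq_nonneg (1 - q - ϱ)]
  have hts : q + s < t := by nlinarith
  have hU1 : 1 < U := by
    rw [show U = (1 + ϱ - s) / (q + s) from rfl, lt_div_iff₀ hqs]
    nlinarith
  have key : (t - s) ^ 2 * (q + s) - q ^ 2 * (1 + ϱ - s) = s * (q + s - t) ^ 2 := by
    linear_combination q * ht2 - q * hs2
  have hdiff : ζ - U = s / (q ^ 2 * (q + s)) * (q + s - t) ^ 2 := by
    have h1 : ζ - U = ((t - s) ^ 2 * (q + s) - q ^ 2 * (1 + ϱ - s)) / (q ^ 2 * (q + s)) := by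
      show ((t - s) / q) ^ 2 - (1 + ϱ - s) / (q + s) = _
      field_simp
      try ring
    rw [h1, key]
    ring
  have hsq : (0:ℝ) < (q + s - t) ^ 2 := by nlinarith
  refine ⟨hU1, ?_, ?_⟩
  · nlinarith [mul_pos (div_pos hs0 (by positivity : (0:ℝ) < q ^ 2 * (q + s))) hsq]
  · rw [hcomm, hdiff]
end

section
/- Let 0 < q < 1, 0 < ϱ < 1−q, and r_q = 2ζ_q^−/(1 + ϱ + q·ζ_q^−) with ζ_q^− = ((√(ϱ+q) − √(ϱ(1−q)))/q)². Then r_q < 1/(ϱ+q). -/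
/-!
With `s = √(ϱ + q)` and `t = √(ϱ(1 - q))` one has `s² - t² = q(1 + ϱ)`, so
`ζ = (1 + ϱ)² / (s + t)²`. The claim reduces to `ζ(2ϱ + q) < 1 + ϱ`, i.e. to
`(1 + ϱ)(2ϱ + q) < (s + t)²`, which after expanding is `ϱ(ϱ + q) < s t`; squaring, this is
`ϱ(ϱ + q) < 1 - q`, true because `ϱ + q < 1` and `ϱ < 1 - q`.
-/

open Real

noncomputable def zetaMinus (q ϱ : ℝ) : ℝ := ((√(ϱ + q) - √(ϱ * (1 - q))) / q) ^ 2

lemma two_mul_div_lt_one_div_of_mul_lt {ζ q ϱ : ℝ} (hpq : 0 < ϱ + q) (hζ : 0 ≤ ζ)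
    (h : ζ * (2 * ϱ + q) < 1 + ϱ) : 2 * ζ / (1 + ϱ + q * ζ) < 1 / (ϱ + q) := by
  have hD : 0 < 1 + ϱ + q * ζ := by nlinarith [mul_nonneg hζ hpq.le]
  rw [div_lt_div_iff₀ hD hpq]
  linarith

section

variable {q ϱ : ℝ}

lemma mul_add_lt_sqrt_mul_sqrt (hq : 0 < q) (hϱ : 0 < ϱ) (hstab : ϱ < 1 - q) :
    ϱ * (ϱ + q) < √(ϱ + q) * √(ϱ * (1 - q)) := by
  have hpq : 0 < ϱ * (ϱ + q) := by positivity
  have hlt : ϱ * (ϱ + q) < 1 - q := by nlinarith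
  rw [← sqrt_mul (by positivity), lt_sqrt hpq.le]
  calc (ϱ * (ϱ + q)) ^ 2 = ϱ * (ϱ + q) * (ϱ * (ϱ + q)) := sq _
    _ < ϱ * (ϱ + q) * (1 - q) := mul_lt_mul_of_pos_left hlt hpq
    _ = (ϱ + q) * (ϱ * (1 - q)) := by ring

lemma mul_lt_sq_sqrt_add_sqrt (hq : 0 < q) (hϱ : 0 < ϱ) (hstab : ϱ < 1 - q) :
    (1 + ϱ) * (2 * ϱ + q) < (√(ϱ + q) + √(ϱ * (1 - q))) ^ 2 := by
  have hst := mul_add_lt_sqrt_mul_sqrt hq hϱ hstab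
  rw [add_sq, sq_sqrt (by positivity), sq_sqrt (by nlinarith)]
  linarith

lemma zetaMinus_eq (hq : 0 < q) (hϱ : 0 < ϱ) (hstab : ϱ < 1 - q) :
    zetaMinus q ϱ = (1 + ϱ) ^ 2 / (√(ϱ + q) + √(ϱ * (1 - q))) ^ 2 := by
  have hs : 0 < √(ϱ + q) := sqrt_pos.mpr (by positivity)
  have hsum : 0 < √(ϱ + q) + √(ϱ * (1 - q)) := by positivity
  have hdiff : √(ϱ + q) - √(ϱ * (1 - q)) = q * (1 + ϱ) / (√(ϱ + q) + √(ϱ * (1 - q))) := by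
    rw [eq_div_iff hsum.ne', mul_comm, ← sq_sub_sq, sq_sqrt (by positivity), sq_sqrt (by nlinarith)]
    ring
  rw [zetaMinus, hdiff, mul_div_assoc, mul_div_cancel_left₀ _ hq.ne', div_pow]

lemma zetaMinus_mul_lt (hq : 0 < q) (hϱ : 0 < ϱ) (hstab : ϱ < 1 - q) :
    zetaMinus q ϱ * (2 * ϱ + q) < 1 + ϱ := by
  have hs : 0 < √(ϱ + q) := sqrt_pos.mpr (by positivity)
  rw [zetaMinus_eq hq hϱ hstab, div_mul_eq_mul_div, div_lt_iff₀ (by positivity)]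
  calc (1 + ϱ) ^ 2 * (2 * ϱ + q) = (1 + ϱ) * ((1 + ϱ) * (2 * ϱ + q)) := by ring
    _ < (1 + ϱ) * (√(ϱ + q) + √(ϱ * (1 - q))) ^ 2 :=
      mul_lt_mul_of_pos_left (mul_lt_sq_sqrt_add_sqrt hq hϱ hstab) (by positivity)

end

theorem stmt_14_general (q ϱ : ℝ) (hq0 : 0 < q) (hϱ : 0 < ϱ)
    (hstab : ϱ < 1 - q) :
    let ζ := ((Real.sqrt (ϱ + q) - Real.sqrt (ϱ * (1 - q))) / q) ^ 2
    2 * ζ / (1 + ϱ + q * ζ) < 1 / (ϱ + q) :=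
  two_mul_div_lt_one_div_of_mul_lt (by linarith) (sq_nonneg _) (zetaMinus_mul_lt hq0 hϱ hstab)

/-- r_q = 2ζ_q^−/(1 + ϱ + q ζ_q^−) < 1/(ϱ+q). -/
theorem stmt_14 (q ϱ : ℝ) (hq0 : 0 < q) (hq1 : q < 1) (hϱ : 0 < ϱ)
    (hstab : ϱ < 1 - q) :
    let ζ := ((Real.sqrt (ϱ + q) - Real.sqrt (ϱ * (1 - q))) / q) ^ 2
    2 * ζ / (1 + ϱ + q * ζ) < 1 / (ϱ + q) :=
  stmt_14_general q ϱ hq0 hϱ hstab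
end
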